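/- arXiv:1701.01999 — 2 statements merged into one kernel-verified Lean document; each statement's English description precedes it below -/
import Mathlib

section
/- The Toffoli gate on three qubits decomposes into five two-qubit gates: CV(1,3) · CNOT(1,2) · CV†(2,3) · CNOT(1,2) · CV(2,3) = TOF as 8×8 complex matrices (matrix product written with the last-applied gate on the left). -/
open Complex Matrix Kronecker

noncomputable def V : Matrix (Fin 2) (Fin 2) ℂ :=
  !![(1 + I)/2, (1 - I)/2; (1 - I)/2, (1 + I)/2]

noncomputable def X : Matrix (Fin 2) (Fin 2) ℂ := !![0, 1; 1, 0]

noncomputable def I₂ : Matrix (Fin 2) (Fin 2) ℂ := 1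

noncomputable def P₀ : Matrix (Fin 2) (Fin 2) ℂ := !![1, 0; 0, 0]

noncomputable def P₁ : Matrix (Fin 2) (Fin 2) ℂ := !![0, 0; 0, 1]

/-- CV(1,3): apply V to qubit 3 when qubit 1 is 1. -/
noncomputable def CV13 := P₀ ⊗ₖ I₂ ⊗ₖ I₂ + P₁ ⊗ₖ I₂ ⊗ₖ V

/-- CV(2,3): apply V to qubit 3 when qubit 2 is 1. -/
noncomputable def CV23 := I₂ ⊗ₖ P₀ ⊗ₖ I₂ + I₂ ⊗ₖ P₁ ⊗ₖ V

/-- CV†(2,3): apply V† to qubit 3 when qubit 2 is 1. -/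
noncomputable def CVd23 := I₂ ⊗ₖ P₀ ⊗ₖ I₂ + I₂ ⊗ₖ P₁ ⊗ₖ Vᴴ

/-- CNOT(1,2): flip qubit 2 when qubit 1 is 1. -/
noncomputable def CNOT12 := P₀ ⊗ₖ I₂ ⊗ₖ I₂ + P₁ ⊗ₖ X ⊗ₖ I₂

/-- The Toffoli gate: |a,b,c⟩ ↦ |a,b,(a AND b) XOR c⟩. -/
noncomputable def TOF := P₀ ⊗ₖ I₂ ⊗ₖ I₂ + P₁ ⊗ₖ P₀ ⊗ₖ I₂ + P₁ ⊗ₖ P₁ ⊗ₖ X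

/-!
Condition on qubit 1. When it is 0, both CNOTs act trivially and CV†(2,3) · CV(2,3) = 1.
When it is 1, conjugating CV†(2,3) by X on qubit 2 swaps its control, so the middle four gates
apply V to qubit 3 if qubit 2 is 1 and V† if it is 0; CV(1,3) then contributes one more V,
and V² = X, V V† = 1.
-/

lemma P₀_mul_self : P₀ * P₀ = P₀ := by
  ext i j; fin_cases i <;> fin_cases j <;> simp [P₀, mul_apply]

lemma P₀_mul_P₁ : P₀ * P₁ = 0 := by
  ext i j; fin_cases i <;> fin_cases j <;> simp [P₀, P₁, mul_apply]

lemma P₁_mul_P₀ : P₁ * P₀ = 0 := by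
  ext i j; fin_cases i <;> fin_cases j <;> simp [P₀, P₁, mul_apply]

lemma P₁_mul_self : P₁ * P₁ = P₁ := by
  ext i j; fin_cases i <;> fin_cases j <;> simp [P₁, mul_apply]

lemma P₀_add_P₁ : P₀ + P₁ = 1 := by
  ext i j; fin_cases i <;> fin_cases j <;> simp [P₀, P₁]

lemma X_mul_P₀_mul_X : X * P₀ * X = P₁ := by
  ext i j; fin_cases i <;> fin_cases j <;> simp [X, P₀, P₁, mul_apply]

lemma X_mul_P₁_mul_X : X * P₁ * X = P₀ := by
  ext i j; fin_cases i <;> fin_cases j <;> simp [X, P₀, P₁, mul_apply]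

lemma V_mul_self : V * V = X := by
  ext i j; fin_cases i <;> fin_cases j <;> simp [V, X, mul_apply, Complex.ext_iff] <;> norm_num

lemma conjTranspose_V : Vᴴ = !![(1 - I) / 2, (1 + I) / 2; (1 + I) / 2, (1 - I) / 2] := by
  ext i j; fin_cases i <;> fin_cases j <;> simp [V, conjTranspose_apply, sub_eq_add_neg]

lemma V_mul_conjTranspose : V * Vᴴ = 1 := by
  rw [conjTranspose_V]
  ext i j; fin_cases i <;> fin_cases j <;> simp [V, mul_apply, Complex.ext_iff] <;> norm_num

lemma conjTranspose_V_mul : Vᴴ * V = 1 := by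
  rw [conjTranspose_V]
  ext i j; fin_cases i <;> fin_cases j <;> simp [V, mul_apply, Complex.ext_iff] <;> norm_num

lemma P₀_kronecker_I₂_kronecker_I₂ :
    P₀ ⊗ₖ I₂ ⊗ₖ I₂ = P₀ ⊗ₖ P₀ ⊗ₖ I₂ + P₀ ⊗ₖ P₁ ⊗ₖ I₂ := by
  rw [← add_kronecker, ← kronecker_add, P₀_add_P₁, I₂]

lemma CNOT12_mul_CVd23_mul_CNOT12 :
    CNOT12 * CVd23 * CNOT12 =
      P₀ ⊗ₖ P₀ ⊗ₖ I₂ + P₀ ⊗ₖ P₁ ⊗ₖ Vᴴ + P₁ ⊗ₖ P₁ ⊗ₖ I₂ + P₁ ⊗ₖ P₀ ⊗ₖ Vᴴ := by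
  simp only [CNOT12, CVd23, I₂, add_mul, mul_add, ← mul_kronecker_mul, one_mul, mul_one,
    P₀_mul_self, P₀_mul_P₁, P₁_mul_P₀, P₁_mul_self, X_mul_P₀_mul_X, X_mul_P₁_mul_X,
    zero_kronecker, add_zero, zero_add]
  abel

lemma CNOT12_mul_CVd23_mul_CNOT12_mul_CV23 :
    CNOT12 * CVd23 * CNOT12 * CV23 =
      P₀ ⊗ₖ I₂ ⊗ₖ I₂ + P₁ ⊗ₖ P₁ ⊗ₖ V + P₁ ⊗ₖ P₀ ⊗ₖ Vᴴ := by
  rw [CNOT12_mul_CVd23_mul_CNOT12, P₀_kronecker_I₂_kronecker_I₂]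
  simp only [CV23, I₂, add_mul, mul_add, ← mul_kronecker_mul, one_mul, mul_one,
    P₀_mul_self, P₀_mul_P₁, P₁_mul_P₀, P₁_mul_self, conjTranspose_V_mul,
    zero_kronecker, kronecker_zero, add_zero, zero_add]
  abel

lemma CV13_mul_eq_TOF :
    CV13 * (P₀ ⊗ₖ I₂ ⊗ₖ I₂ + P₁ ⊗ₖ P₁ ⊗ₖ V + P₁ ⊗ₖ P₀ ⊗ₖ Vᴴ) = TOF := by
  simp only [CV13, TOF, I₂, add_mul, mul_add, ← mul_kronecker_mul, one_mul, mul_one,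
    P₀_mul_self, P₀_mul_P₁, P₁_mul_P₀, P₁_mul_self, V_mul_self, V_mul_conjTranspose,
    zero_kronecker, add_zero, zero_add]
  abel

/-- The five two-qubit gate decomposition of the Toffoli gate. -/
theorem toffoli_five_gate_decomposition :
    CV13 * CNOT12 * CVd23 * CNOT12 * CV23 = TOF := by
  calc CV13 * CNOT12 * CVd23 * CNOT12 * CV23 = CV13 * (CNOT12 * CVd23 * CNOT12 * CV23) := by
        simp only [mul_assoc]
    _ = TOF := by
        rw [CNOT12_mul_CVd23_mul_CNOT12_mul_CV23, CV13_mul_eq_TOF]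
end

section
/- Toffoli gate decomposition: for every n > 2, a Toffoli gate with n control bits can be decomposed into 2^(n-2)+1 Toffoli gates with 2 control bits using n-2 ancilla bits. Precisely: there exists a list of exactly 2^(n-2)+1 two-control Toffoli gate functions on states s : Fin (2n-1) → Bool (each gate picks three distinct coordinates i, j, k and replaces s k by s k XOR (s i AND s j), leaving all other coordinates unchanged) such that, for every state s whose n-2 ancilla coordinates are all false, the composition of the gates produces a state whose target coordinate equals (s target) XOR (the AND of the n control coordinates of s) and whose n control coordinates are unchanged. -/
/-!
The `n`-control Toffoli gate is built by compute–copy–uncompute. A ladder of `n - 2`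
two-control gates writes the conjunction of controls `0, …, k` onto ancilla `n + k`,
the `k`-th gate combining the previous partial conjunction (control `0` itself when
`k = 1`) with control `k`; one gate on the last ancilla and control `n - 1` XORs the
full conjunction into the target; the
reversed ladder restores the ancillas, since every gate is an involution and none of
them touches the target.
-/

/-- The two-control Toffoli gate on distinct wires `i`, `j` (controls) and `k`
(target): coordinate `k` is updated to `s k XOR (s i AND s j)`. -/
def toffoli2 {w : ℕ} (i j k : Fin w) (s : Fin w → Bool) : Fin w → Bool :=
  Function.update s k (xor (s k) (s i && s j))

open Function

section Toffoli

variable {w : ℕ}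

theorem toffoli2_apply_of_ne {i j k x : Fin w} (hx : x ≠ k) (s : Fin w → Bool) :
    toffoli2 i j k s x = s x :=
  update_of_ne hx _ _

theorem toffoli2_apply_self (i j k : Fin w) (s : Fin w → Bool) :
    toffoli2 i j k s k = xor (s k) (s i && s j) :=
  update_self _ _ _

theorem toffoli2_involutive {i j k : Fin w} (hik : i ≠ k) (hjk : j ≠ k) :
    Involutive (toffoli2 i j k) := by
  intro s
  simp only [toffoli2, update_idem, update_self, update_of_ne hik, update_of_ne hjk,
    Bool.xor_assoc, Bool.xor_self, Bool.xor_false, update_eq_self]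

theorem toffoli2_commute_update {i j k t : Fin w} (hit : i ≠ t) (hjt : j ≠ t) (hkt : k ≠ t)
    (b : Bool) : Function.Commute (toffoli2 i j k) (update · t b) := by
  intro s
  simp only [toffoli2, update_of_ne hit, update_of_ne hjt, update_of_ne hkt]
  exact (update_comm hkt _ _ _).symm

end Toffoli

section Circuit

variable {α : Type*}

theorem foldl_apply_commute {L : List (α → α)} {f : α → α}
    (h : ∀ g ∈ L, Function.Commute g f) (s : α) :
    L.foldl (fun st g => g st) (f s) = f (L.foldl (fun st g => g st) s) := by
  induction L generalizing s with
  | nil => rfl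
  | cons g L ih =>
    rw [List.foldl_cons, List.foldl_cons, h g List.mem_cons_self s]
    exact ih (fun g' hg' => h g' (List.mem_cons_of_mem _ hg')) _

theorem foldl_apply_reverse_foldl_apply {L : List (α → α)} (h : ∀ g ∈ L, Involutive g)
    (s : α) :
    L.reverse.foldl (fun st g => g st) (L.foldl (fun st g => g st) s) = s := by
  induction L generalizing s with
  | nil => rfl
  | cons g L ih =>
    simp only [List.reverse_cons, List.foldl_append, List.foldl_cons, List.foldl_nil]
    rw [ih (fun g' hg' => h g' (List.mem_cons_of_mem _ hg')), h g List.mem_cons_self]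

theorem foldl_apply_replicate_two_mul {g : α → α} (hg : Involutive g) (q : ℕ) (s : α) :
    (List.replicate (2 * q) g).foldl (fun st g => g st) s = s := by
  induction q with
  | zero => rfl
  | succ q ih =>
    rw [Nat.mul_succ, List.replicate_add]
    simp only [List.foldl_append, ih, List.replicate, List.foldl_cons, List.foldl_nil, hg s]

theorem foldl_apply_compute_uncompute {C : List (α → α)} {T f : α → α}
    (hinv : ∀ g ∈ C, Involutive g) (hcomm : ∀ g ∈ C, Function.Commute g f)
    {s : α} (hT : T (C.foldl (fun st g => g st) s) = f (C.foldl (fun st g => g st) s)) :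
    (C ++ [T] ++ C.reverse).foldl (fun st g => g st) s = f s := by
  have hcomm' : ∀ g ∈ C.reverse, Function.Commute g f :=
    fun g hg => hcomm g (List.mem_reverse.1 hg)
  simp only [List.foldl_append, List.foldl_cons, List.foldl_nil, hT,
    foldl_apply_commute hcomm', foldl_apply_reverse_foldl_apply hinv]

end Circuit

theorem Fin.forall_val_le_succ_iff {w m : ℕ} {p : Fin w → Prop} {x : Fin w}
    (hx : x.val = m + 1) :
    (∀ c : Fin w, c.val ≤ m + 1 → p c) ↔ (∀ c : Fin w, c.val ≤ m → p c) ∧ p x := by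
  refine ⟨fun h => ⟨fun c hc => h c (by omega), h x hx.le⟩, fun ⟨h, hpx⟩ c hc => ?_⟩
  rcases Nat.lt_or_eq_of_le hc with hc | hc
  · exact h c (by omega)
  · rwa [Fin.ext (hc.trans hx.symm)]

section Ladder

variable {n : ℕ} (hn : 2 < n)

/-- Wire `k` of `Fin (2 * n - 1)`, clamped to the last wire so that it is total in `k`. -/
def wire (k : ℕ) : Fin (2 * n - 1) := ⟨min k (2 * n - 2), by omega⟩

theorem wire_val {k : ℕ} (hk : k ≤ 2 * n - 2) : (wire hn k).val = k := min_eq_left hk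

theorem wire_ne_wire {k l : ℕ} (hk : k ≤ 2 * n - 2) (hl : l ≤ 2 * n - 2) (hkl : k ≠ l) :
    wire hn k ≠ wire hn l :=
  Fin.ne_of_val_ne (by rwa [wire_val hn hk, wire_val hn hl])

/-- The index of the wire on which the ladder accumulates the conjunction of
controls `0, …, k`: control `0` itself for `k = 0`, ancilla `n + k` otherwise. -/
def accIndex (n k : ℕ) : ℕ := if k = 0 then 0 else n + k

theorem accIndex_succ (n k : ℕ) : accIndex n (k + 1) = n + (k + 1) := if_neg k.succ_ne_zero

def ladderGate (k : ℕ) : (Fin (2 * n - 1) → Bool) → Fin (2 * n - 1) → Bool :=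
  toffoli2 (wire hn (accIndex n k)) (wire hn (k + 1)) (wire hn (accIndex n (k + 1)))

def ladder : ℕ → List ((Fin (2 * n - 1) → Bool) → Fin (2 * n - 1) → Bool)
  | 0 => []
  | m + 1 => ladder m ++ [ladderGate hn m]

theorem length_ladder (m : ℕ) : (ladder hn m).length = m := by
  induction m with
  | zero => rfl
  | succ m ih => simp [ladder, ih]

theorem mem_ladder {m : ℕ} {g} (hg : g ∈ ladder hn m) : ∃ k < m, g = ladderGate hn k := by
  induction m with
  | zero => simp [ladder] at hg
  | succ m ih =>
    rcases List.mem_append.1 hg with hg | hg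
    · obtain ⟨k, hk, rfl⟩ := ih hg
      exact ⟨k, by omega, rfl⟩
    · exact ⟨m, by omega, List.mem_singleton.1 hg⟩

theorem ladderGate_wires {k : ℕ} (hk : k + 1 ≤ n - 2) :
    ∃ i j l : Fin (2 * n - 1), i ≠ j ∧ i ≠ l ∧ j ≠ l ∧
      i ≠ wire hn n ∧ j ≠ wire hn n ∧ l ≠ wire hn n ∧
      ladderGate hn k = toffoli2 i j l := by
  unfold ladderGate
  rw [accIndex_succ]
  unfold accIndex
  split_ifs <;> refine ⟨_, _, _, ?_, ?_, ?_, ?_, ?_, ?_, rfl⟩ <;> apply wire_ne_wire <;> omega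

theorem ladder_apply_of_not_ancilla (s : Fin (2 * n - 1) → Bool) {m : ℕ} {x : Fin (2 * n - 1)}
    (hx : x.val ≤ n ∨ n + m < x.val) :
    (ladder hn m).foldl (fun st g => g st) s x = s x := by
  induction m with
  | zero => rfl
  | succ m ih =>
    have hne : x ≠ wire hn (accIndex n (m + 1)) := by
      rintro rfl
      simp only [wire, accIndex_succ, Fin.val_mk] at hx
      omega
    simp only [ladder, List.foldl_append, List.foldl_cons, List.foldl_nil, ladderGate,
      toffoli2_apply_of_ne hne]
    exact ih (by omega)

theorem ladder_apply_wire_accIndex (s : Fin (2 * n - 1) → Bool)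
    (hanc : ∀ a : Fin (2 * n - 1), n < a.val → s a = false) {m : ℕ} (hm : m ≤ n - 2) :
    (ladder hn m).foldl (fun st g => g st) s (wire hn (accIndex n m)) =
      decide (∀ c : Fin (2 * n - 1), c.val ≤ m → s c = true) := by
  induction m with
  | zero =>
    simp only [ladder, List.foldl_nil, accIndex, if_true, Nat.le_zero]
    have hw : (wire hn 0).val = 0 := wire_val hn (by omega)
    have hiff : (∀ c : Fin (2 * n - 1), c.val = 0 → s c = true) ↔ s (wire hn 0) = true :=
      ⟨fun h => h _ hw, fun h c hc => Fin.ext (hc.trans hw.symm) ▸ h⟩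
    simp only [hiff, Bool.decide_eq_true]
  | succ m ih =>
    have hacc : (wire hn (accIndex n (m + 1))).val = n + (m + 1) := by
      rw [accIndex_succ]
      exact wire_val hn (by omega)
    have hctrl : (wire hn (m + 1)).val = m + 1 := wire_val hn (by omega)
    have hfresh : (ladder hn m).foldl (fun st g => g st) s (wire hn (accIndex n (m + 1))) =
        false := by
      rw [ladder_apply_of_not_ancilla hn s (m := m) (by omega)]
      exact hanc _ (by omega)
    have hkept : (ladder hn m).foldl (fun st g => g st) s (wire hn (m + 1)) =
        s (wire hn (m + 1)) :=
      ladder_apply_of_not_ancilla hn s (by omega)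
    simp only [ladder, List.foldl_append, List.foldl_cons, List.foldl_nil, ladderGate,
      toffoli2_apply_self, hfresh, hkept, ih (by omega), Bool.false_xor]
    rw [decide_eq_decide.2 (Fin.forall_val_le_succ_iff hctrl), Bool.decide_and,
      Bool.decide_eq_true]

def targetGate : (Fin (2 * n - 1) → Bool) → Fin (2 * n - 1) → Bool :=
  toffoli2 (wire hn (accIndex n (n - 2))) (wire hn (n - 1)) (wire hn n)

theorem targetGate_wires :
    wire hn (accIndex n (n - 2)) ≠ wire hn (n - 1) ∧
      wire hn (accIndex n (n - 2)) ≠ wire hn n ∧ wire hn (n - 1) ≠ wire hn n := by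
  obtain ⟨k, hk⟩ : ∃ k, n - 2 = k + 1 := ⟨n - 3, by omega⟩
  rw [hk, accIndex_succ]
  refine ⟨?_, ?_, ?_⟩ <;> apply wire_ne_wire <;> omega

/-- The ladder construction uses `2 (n - 2) + 1` gates; to reach the prescribed count
`2 ^ (n - 2) + 1` it is padded with cancelling pairs of the target gate. -/
def toffoliCircuit : List ((Fin (2 * n - 1) → Bool) → Fin (2 * n - 1) → Bool) :=
  ladder hn (n - 2) ++ [targetGate hn] ++ (ladder hn (n - 2)).reverse ++
    List.replicate (2 * (2 ^ (n - 3) - (n - 2))) (targetGate hn)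

theorem length_toffoliCircuit : (toffoliCircuit hn).length = 2 ^ (n - 2) + 1 := by
  have hpow : 2 ^ (n - 2) = 2 * 2 ^ (n - 3) := by
    rw [show n - 2 = n - 3 + 1 by omega, pow_succ, mul_comm]
  have hlt : n - 3 < 2 ^ (n - 3) := Nat.lt_two_pow_self
  simp only [toffoliCircuit, List.length_append, List.length_reverse, List.length_replicate,
    List.length_singleton, length_ladder]
  omega

theorem exists_wires_of_mem_ladder {g} (hg : g ∈ ladder hn (n - 2)) :
    ∃ i j l : Fin (2 * n - 1), i ≠ j ∧ i ≠ l ∧ j ≠ l ∧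
      i ≠ wire hn n ∧ j ≠ wire hn n ∧ l ≠ wire hn n ∧ g = toffoli2 i j l := by
  obtain ⟨k, hk, rfl⟩ := mem_ladder hn hg
  exact ladderGate_wires hn (by omega)

theorem toffoliCircuit_gates :
    ∀ g ∈ toffoliCircuit hn, ∃ i j k : Fin (2 * n - 1),
      i ≠ j ∧ i ≠ k ∧ j ≠ k ∧ g = toffoli2 i j k := by
  intro g hg
  have hg' : g ∈ ladder hn (n - 2) ∨ g = targetGate hn := by
    simp only [toffoliCircuit, List.mem_append, List.mem_reverse, List.mem_singleton,
      List.mem_replicate] at hg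
    tauto
  rcases hg' with hg | rfl
  · obtain ⟨i, j, l, hij, hil, hjl, -, -, -, rfl⟩ := exists_wires_of_mem_ladder hn hg
    exact ⟨i, j, l, hij, hil, hjl, rfl⟩
  · obtain ⟨h1, h2, h3⟩ := targetGate_wires hn
    exact ⟨_, _, _, h1, h2, h3, rfl⟩

theorem targetGate_apply_ladder (s : Fin (2 * n - 1) → Bool)
    (hanc : ∀ a : Fin (2 * n - 1), n < a.val → s a = false) :
    targetGate hn ((ladder hn (n - 2)).foldl (fun st g => g st) s) =
      update ((ladder hn (n - 2)).foldl (fun st g => g st) s) (wire hn n)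
        (xor (s (wire hn n)) (decide (∀ c : Fin (2 * n - 1), c.val < n → s c = true))) := by
  have hlast : (wire hn (n - 2 + 1)).val = n - 2 + 1 := wire_val hn (by omega)
  have hctrls : (∀ c : Fin (2 * n - 1), c.val < n → s c = true) ↔
      (∀ c : Fin (2 * n - 1), c.val ≤ n - 2 + 1 → s c = true) :=
    forall_congr' fun c => by rw [show c.val < n ↔ c.val ≤ n - 2 + 1 by omega]
  have htarget : (wire hn n).val = n := wire_val hn (by omega)
  have hctrl : (wire hn (n - 1)).val = n - 1 := wire_val hn (by omega)
  rw [targetGate, toffoli2, ladder_apply_wire_accIndex hn s hanc le_rfl,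
    ladder_apply_of_not_ancilla hn s (x := wire hn n) (by omega),
    ladder_apply_of_not_ancilla hn s (x := wire hn (n - 1)) (by omega),
    decide_eq_decide.2 (hctrls.trans (Fin.forall_val_le_succ_iff hlast)), Bool.decide_and,
    Bool.decide_eq_true, show n - 2 + 1 = n - 1 by omega]

theorem toffoliCircuit_apply (s : Fin (2 * n - 1) → Bool)
    (hanc : ∀ a : Fin (2 * n - 1), n < a.val → s a = false) :
    (toffoliCircuit hn).foldl (fun st g => g st) s =
      update s (wire hn n)
        (xor (s (wire hn n)) (decide (∀ c : Fin (2 * n - 1), c.val < n → s c = true))) := by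
  have hinv : ∀ g ∈ ladder hn (n - 2), Involutive g := fun g hg => by
    obtain ⟨i, j, l, -, hil, hjl, -, -, -, rfl⟩ := exists_wires_of_mem_ladder hn hg
    exact toffoli2_involutive hil hjl
  have hcomm (b : Bool) :
      ∀ g ∈ ladder hn (n - 2), Function.Commute g (update · (wire hn n) b) := fun g hg => by
    obtain ⟨i, j, l, -, -, -, hi, hj, hl, rfl⟩ := exists_wires_of_mem_ladder hn hg
    exact toffoli2_commute_update hi hj hl b
  obtain ⟨-, h2, h3⟩ := targetGate_wires hn
  rw [toffoliCircuit, List.foldl_append,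
    foldl_apply_compute_uncompute hinv (hcomm _) (targetGate_apply_ladder hn s hanc)]
  exact foldl_apply_replicate_two_mul (g := targetGate hn) (toffoli2_involutive h2 h3) _ _

end Ladder

/-- Toffoli gate decomposition: for `n > 2`, the `n`-control Toffoli on wires
`Fin (2n-1)` (controls `0,…,n-1`, target `n`, ancillas `n+1,…,2n-2`) is realized
by a list of exactly `2^(n-2) + 1` two-control Toffoli gates: on every state whose
ancilla coordinates are all `false`, the composition XORs the target with the AND
of all `n` controls and leaves the controls unchanged. -/
theorem toffoli_decomposition (n : ℕ) (hn : 2 < n) :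
    ∃ L : List ((Fin (2 * n - 1) → Bool) → (Fin (2 * n - 1) → Bool)),
      L.length = 2 ^ (n - 2) + 1 ∧
      (∀ g ∈ L, ∃ i j k : Fin (2 * n - 1),
        i ≠ j ∧ i ≠ k ∧ j ≠ k ∧ g = toffoli2 i j k) ∧
      ∀ s : Fin (2 * n - 1) → Bool,
        (∀ a : Fin (2 * n - 1), n < a.val → s a = false) →
        (L.foldl (fun st g => g st) s) ⟨n, by omega⟩ =
          xor (s ⟨n, by omega⟩)
            (decide (∀ c : Fin (2 * n - 1), c.val < n → s c = true)) ∧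
        ∀ c : Fin (2 * n - 1), c.val < n →
          (L.foldl (fun st g => g st) s) c = s c := by
  have htarget : wire hn n = ⟨n, by omega⟩ := Fin.ext (wire_val hn (by omega))
  refine ⟨toffoliCircuit hn, length_toffoliCircuit hn, toffoliCircuit_gates hn,
    fun s hanc => ?_⟩
  rw [toffoliCircuit_apply hn s hanc, htarget]
  exact ⟨update_self _ _ _, fun c hc => update_of_ne (Fin.ne_of_val_ne hc.ne) _ _⟩
end
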